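/- Let C and C' be two (α,γ)-clusterings of X with d(C,C') > 0. Then d(C,C') ≥ α·(γ−1)² / (2γ² − γ + 1). -/

import Mathlib

open Finset
open scoped symmDiff

/-- `P(A)`: the probability mass of a finite set `A`. -/
noncomputable def pOf {X : Type*} (P : X → ℝ) (A : Finset X) : ℝ := ∑ x ∈ A, P x

/-- `Δ(x,A)`: the average distance from `x` to `A`,
weighted by the probability mass function `P` restricted to `A`. -/
noncomputable def Dpt {X : Type*} [MetricSpace X] (P : X → ℝ) (x : X) (A : Finset X) : ℝ :=
  (∑ y ∈ A, P y * dist x y) / pOf P A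

/-- `{C_1,…,C_k}` is an `(α,γ)`-clustering: a partition of `X` into nonempty parts, each of
probability at least `α`, such that `Δ(x,C_j) ≥ γ·Δ(x,C_i)` for all `i ≠ j` and `x ∈ C_i`. -/
def IsGoodClustering {X : Type*} [Fintype X] [MetricSpace X] (P : X → ℝ) (α γ : ℝ)
    {k : ℕ} (C : Fin k → Finset X) : Prop :=
  (∀ i, (C i).Nonempty) ∧
  (∀ i j, i ≠ j → Disjoint (C i) (C j)) ∧
  (∀ x : X, ∃ i, x ∈ C i) ∧
  (∀ i, α ≤ pOf P (C i)) ∧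
  (∀ i j, i ≠ j → ∀ x ∈ C i, γ * Dpt P x (C i) ≤ Dpt P x (C j))

/-- The symmetric-difference distance between two (equal-length) collections of subsets of `X`:
the minimum over permutations `σ` of `P(∪ᵢ (Cᵢ ⊕ C'_{σ(i)}))`. -/
noncomputable def dColl {X : Type*} [DecidableEq X] (P : X → ℝ) {k : ℕ}
    (C C' : Fin k → Finset X) : ℝ :=
  Finset.univ.inf' ⟨Equiv.refl _, Finset.mem_univ _⟩ (fun σ : Equiv.Perm (Fin k) =>
    pOf P (Finset.univ.biUnion fun i => (C i) ∆ (C' (σ i))))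

/-- Pad a collection of `k` sets with empty sets to obtain a collection of `K ≥ k` sets. -/
def pad {X : Type*} {k K : ℕ} (h : k ≤ K) (C : Fin k → Finset X) : Fin K → Finset X :=
  fun i => if h' : (i : ℕ) < k then C ⟨i, h'⟩ else ∅

/-!
Match the clusters by an optimal permutation and let `B`, of mass `ε = d(C,C')`, be the union of
the symmetric differences. If the numbers of clusters differ, some cluster is matched with `∅`,
so `ε ≥ α`. Otherwise, when `ε < α`, the common cores `S i = C i ∩ C' i` keep mass `≥ α - ε`, and
averages over a cluster are controlled by averages over its core up to relative errors `ε / α`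
(triangle inequality through the core). A point of `B` lies in clusters `i ≠ j` of `C` and `C'`
respectively; the separation condition in each clustering then bounds `Δ(x, S i)` by `Δ(x, S j)`
and conversely. Averaging over `B` against `P` gives `γ (1 - ε/α) ≤ 1 + 2ε/α`, that is
`ε ≥ α(γ-1)/(γ+2)`, which dominates `α(γ-1)²/(2γ²-γ+1)`.
-/

section Mass

variable {X : Type*} {P : X → ℝ}

theorem pOf_nonneg (hP : ∀ x, 0 ≤ P x) (A : Finset X) : 0 ≤ pOf P A :=
  sum_nonneg fun x _ => hP x

theorem pOf_mono (hP : ∀ x, 0 ≤ P x) {A B : Finset X} (h : A ⊆ B) : pOf P A ≤ pOf P B :=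
  sum_le_sum_of_subset_of_nonneg h fun x _ _ => hP x

theorem pOf_pos (hP : ∀ x, 0 < P x) {A : Finset X} (hA : A.Nonempty) : 0 < pOf P A :=
  sum_pos (fun x _ => hP x) hA

theorem pOf_sdiff_add_pOf [DecidableEq X] {S D : Finset X} (h : S ⊆ D) :
    pOf P (D \ S) + pOf P S = pOf P D :=
  sum_sdiff h

theorem pOf_pos_of_pOf_sdiff_le [DecidableEq X] {S D : Finset X} {α ε : ℝ} (h : S ⊆ D)
    (hDS : pOf P (D \ S) ≤ ε) (hεα : ε < α) (hD : α ≤ pOf P D) : 0 < pOf P S := by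
  linarith [pOf_sdiff_add_pOf (P := P) h]

end Mass

section AverageDistance

variable {X : Type*} [MetricSpace X] {P : X → ℝ}

theorem Dpt_nonneg (hP : ∀ x, 0 ≤ P x) (x : X) (A : Finset X) : 0 ≤ Dpt P x A :=
  div_nonneg (sum_nonneg fun y _ => mul_nonneg (hP y) dist_nonneg) (pOf_nonneg hP A)

theorem Dpt_pos (hP : ∀ x, 0 < P x) {x : X} {A : Finset X} (hA : A.Nonempty) (hx : x ∉ A) :
    0 < Dpt P x A :=
  div_pos (sum_pos (fun y hy => mul_pos (hP y) (dist_pos.2 fun h => hx (h ▸ hy))) hA)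
    (pOf_pos hP hA)

theorem pOf_mul_Dpt {A : Finset X} (hA : pOf P A ≠ 0) (x : X) :
    pOf P A * Dpt P x A = ∑ y ∈ A, P y * dist x y :=
  mul_div_cancel₀ _ hA

theorem dist_le_Dpt_add_Dpt (hP : ∀ x, 0 ≤ P x) {S : Finset X} (hS : 0 < pOf P S) (x y : X) :
    dist x y ≤ Dpt P x S + Dpt P y S := by
  rw [Dpt, Dpt, ← add_div, le_div_iff₀ hS, pOf, mul_sum, ← sum_add_distrib]
  refine sum_le_sum fun z _ => ?_
  rw [← mul_add, mul_comm]
  exact mul_le_mul_of_nonneg_left (dist_triangle_right x y z) (hP z)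

theorem sum_mul_dist_le (hP : ∀ x, 0 ≤ P x) {S : Finset X} (hS : 0 < pOf P S) (x : X)
    (T : Finset X) :
    ∑ y ∈ T, P y * dist x y ≤ pOf P T * Dpt P x S + ∑ y ∈ T, P y * Dpt P y S := by
  rw [pOf, sum_mul, ← sum_add_distrib]
  refine sum_le_sum fun y _ => ?_
  rw [← mul_add]
  exact mul_le_mul_of_nonneg_left (dist_le_Dpt_add_Dpt hP hS x y) (hP y)

variable [DecidableEq X] {S D : Finset X} {α ε : ℝ}

theorem one_sub_div_mul_Dpt_le (hP : ∀ x, 0 ≤ P x) (hα : 0 < α) (hSD : S ⊆ D)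
    (hDS : pOf P (D \ S) ≤ ε) (hεα : ε < α) (hD : α ≤ pOf P D) (x : X) :
    (1 - ε / α) * Dpt P x S ≤ Dpt P x D := by
  have hd : 0 < pOf P D := hα.trans_le hD
  have hs : 0 < pOf P S := pOf_pos_of_pOf_sdiff_le hSD hDS hεα hD
  have hε : 0 ≤ ε := (pOf_nonneg hP _).trans hDS
  have hratio : 1 - ε / α ≤ pOf P S / pOf P D := by
    have : ε ≤ ε / α * pOf P D := by
      rw [div_mul_eq_mul_div, le_div_iff₀ hα]
      exact mul_le_mul_of_nonneg_left hD hε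
    rw [le_div_iff₀ hd]
    linarith [pOf_sdiff_add_pOf (P := P) hSD]
  calc (1 - ε / α) * Dpt P x S ≤ pOf P S / pOf P D * Dpt P x S :=
        mul_le_mul_of_nonneg_right hratio (Dpt_nonneg hP x S)
    _ = (∑ y ∈ S, P y * dist x y) / pOf P D := by
        rw [div_mul_eq_mul_div, pOf_mul_Dpt hs.ne']
    _ ≤ Dpt P x D :=
        div_le_div_of_nonneg_right
          (sum_le_sum_of_subset_of_nonneg hSD fun y _ _ => mul_nonneg (hP y) dist_nonneg) hd.le

theorem Dpt_le_Dpt_add_div (hP : ∀ x, 0 ≤ P x) (hα : 0 < α) (hSD : S ⊆ D)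
    (hS : 0 < pOf P S) (hD : α ≤ pOf P D) (x : X) :
    Dpt P x D ≤ Dpt P x S + (∑ y ∈ D \ S, P y * dist x y) / α := by
  have hSD' : pOf P S ≤ pOf P D := pOf_mono hP hSD
  calc Dpt P x D
      = (∑ y ∈ S, P y * dist x y) / pOf P D + (∑ y ∈ D \ S, P y * dist x y) / pOf P D := by
        rw [Dpt, ← sum_sdiff hSD, add_div, add_comm]
    _ ≤ Dpt P x S + (∑ y ∈ D \ S, P y * dist x y) / α :=
        add_le_add
          (div_le_div_of_nonneg_left (sum_nonneg fun y _ => mul_nonneg (hP y) dist_nonneg) hS hSD')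
          (div_le_div_of_nonneg_left (sum_nonneg fun y _ => mul_nonneg (hP y) dist_nonneg) hα hD)

end AverageDistance

section Padding

variable {X : Type*}

theorem pad_apply_of_lt {k K : ℕ} (h : k ≤ K) (C : Fin k → Finset X) {i : Fin K}
    (hi : (i : ℕ) < k) : pad h C i = C ⟨i, hi⟩ :=
  dif_pos hi

theorem pad_apply_of_le {k K : ℕ} (h : k ≤ K) (C : Fin k → Finset X) {i : Fin K}
    (hi : k ≤ i) : pad h C i = ∅ :=
  dif_neg hi.not_gt

end Padding

section Clustering

variable {X : Type*} [Fintype X] [MetricSpace X] {P : X → ℝ} {α γ : ℝ}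

theorem IsGoodClustering.exists_label {K : ℕ} {D : Fin K → Finset X}
    (hD : IsGoodClustering P α γ D) : ∃ ℓ : X → Fin K, ∀ x i, x ∈ D i ↔ ℓ x = i := by
  choose ℓ hℓ using hD.2.2.1
  refine ⟨ℓ, fun x i => ⟨fun hx => ?_, fun h => h ▸ hℓ x⟩⟩
  by_contra hne
  exact disjoint_left.1 (hD.2.1 _ _ hne) (hℓ x) hx

theorem IsGoodClustering.comp_equiv {k K : ℕ} {C : Fin k → Finset X}
    (hC : IsGoodClustering P α γ C) (e : Fin K ≃ Fin k) : IsGoodClustering P α γ (C ∘ e) := by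
  obtain ⟨hne, hdisj, hcov, hmass, hsep⟩ := hC
  refine ⟨fun i => hne _, fun i j hij => hdisj _ _ (e.injective.ne hij), fun x => ?_,
    fun i => hmass _, fun i j hij => hsep _ _ (e.injective.ne hij)⟩
  obtain ⟨j, hj⟩ := hcov x
  exact ⟨e.symm j, by simpa using hj⟩

theorem IsGoodClustering.pad {k K : ℕ} {C : Fin k → Finset X} (hC : IsGoodClustering P α γ C)
    (h : k ≤ K) (hK : K ≤ k) : IsGoodClustering P α γ (_root_.pad h C) := by
  have : _root_.pad h C = C ∘ finCongr (le_antisymm hK h) :=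
    funext fun i => pad_apply_of_lt h C (i.isLt.trans_le hK)
  rw [this]
  exact hC.comp_equiv _

variable [DecidableEq X]

/-- The separation condition for `x ∈ D i` against `D j`, transported to cores `S i ⊆ D i` whose
complements lie in a set `B` of small mass. -/
theorem IsGoodClustering.mul_Dpt_le {K : ℕ} {D S : Fin K → Finset X} {B : Finset X} {ε : ℝ}
    (hP : ∀ x, 0 ≤ P x) (hα : 0 < α) (hγ : 0 ≤ γ) (hD : IsGoodClustering P α γ D)
    {ℓ : X → Fin K} (hℓ : ∀ x i, x ∈ D i ↔ ℓ x = i) (hSD : ∀ i, S i ⊆ D i)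
    (hDSB : ∀ i, D i \ S i ⊆ B) (hB : pOf P B ≤ ε) (hεα : ε < α)
    {i j : Fin K} (hij : i ≠ j) {x : X} (hx : x ∈ D i) :
    γ * (1 - ε / α) * Dpt P x (S i) ≤
      Dpt P x (S j) + (ε * Dpt P x (S j) + ∑ y ∈ B, P y * Dpt P y (S (ℓ y))) / α := by
  have hDS : ∀ i, pOf P (D i \ S i) ≤ ε := fun i => (pOf_mono hP (hDSB i)).trans hB
  have hS : 0 < pOf P (S j) := pOf_pos_of_pOf_sdiff_le (hSD j) (hDS j) hεα (hD.2.2.2.1 j)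
  have hcore : ∑ y ∈ D j \ S j, P y * Dpt P y (S j) ≤ ∑ y ∈ B, P y * Dpt P y (S (ℓ y)) :=
    calc ∑ y ∈ D j \ S j, P y * Dpt P y (S j) = ∑ y ∈ D j \ S j, P y * Dpt P y (S (ℓ y)) :=
          sum_congr rfl fun y hy => by rw [(hℓ y j).1 (mem_sdiff.1 hy).1]
      _ ≤ _ := sum_le_sum_of_subset_of_nonneg (hDSB j) fun y _ _ =>
          mul_nonneg (hP y) (Dpt_nonneg hP y _)
  have hfar : ∑ y ∈ D j \ S j, P y * dist x y ≤
      ε * Dpt P x (S j) + ∑ y ∈ B, P y * Dpt P y (S (ℓ y)) :=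
    (sum_mul_dist_le hP hS x _).trans
      (add_le_add (mul_le_mul_of_nonneg_right (hDS j) (Dpt_nonneg hP x _)) hcore)
  calc γ * (1 - ε / α) * Dpt P x (S i) = γ * ((1 - ε / α) * Dpt P x (S i)) := mul_assoc _ _ _
    _ ≤ γ * Dpt P x (D i) := mul_le_mul_of_nonneg_left
        (one_sub_div_mul_Dpt_le hP hα (hSD i) (hDS i) hεα (hD.2.2.2.1 i) x) hγ
    _ ≤ Dpt P x (D j) := hD.2.2.2.2 i j hij x hx
    _ ≤ Dpt P x (S j) + (∑ y ∈ D j \ S j, P y * dist x y) / α :=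
        Dpt_le_Dpt_add_div hP hα (hSD j) hS (hD.2.2.2.1 j) x
    _ ≤ _ := by gcongr

end Clustering

theorem le_one_add_two_mul_div_of_forall_le {ι : Type*} {B : Finset ι} {w f : ι → ℝ}
    {c ε α : ℝ} (hw : ∀ x ∈ B, 0 ≤ w x) (hwB : ∑ x ∈ B, w x = ε)
    (hW : 0 < ∑ x ∈ B, w x * f x)
    (h : ∀ x ∈ B, c * f x ≤ f x + (ε * f x + ∑ y ∈ B, w y * f y) / α) :
    c ≤ 1 + 2 * ε / α := by
  set W := ∑ x ∈ B, w x * f x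
  have hsum := sum_le_sum fun x hx => mul_le_mul_of_nonneg_left (h x hx) (hw x hx)
  have hL : ∑ x ∈ B, w x * (c * f x) = c * W := by
    rw [mul_sum]
    exact sum_congr rfl fun _ _ => by ring
  have hR : ∑ x ∈ B, w x * (f x + (ε * f x + W) / α) = (1 + 2 * ε / α) * W := by
    have : ∀ x, w x * (f x + (ε * f x + W) / α) = (1 + ε / α) * (w x * f x) + W / α * w x :=
      fun x => by ring
    rw [sum_congr rfl fun x _ => this x, sum_add_distrib, ← mul_sum, ← mul_sum, hwB]
    ring
  rw [hL, hR] at hsum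
  exact le_of_mul_le_mul_right hsum hW

theorem mul_sub_one_div_add_two_le {α γ : ℝ} (hα : 0 ≤ α) (hγ : 0 ≤ γ) :
    α * (γ - 1) / (γ + 2) ≤ α := by
  rw [div_le_iff₀ (by linarith)]
  nlinarith

theorem mul_sub_one_div_add_two_le_of_mul_one_sub_le {α γ ε : ℝ} (hα : 0 < α) (hγ : 0 ≤ γ)
    (h : γ * (1 - ε / α) ≤ 1 + 2 * ε / α) : α * (γ - 1) / (γ + 2) ≤ ε := by
  rw [div_le_iff₀ (by linarith)]
  have := mul_le_mul_of_nonneg_right h hα.le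
  field_simp at this
  linarith

theorem mul_sub_one_sq_div_le_mul_sub_one_div_add_two {α γ : ℝ} (hα : 0 ≤ α) (hγ : 1 ≤ γ) :
    α * (γ - 1) ^ 2 / (2 * γ ^ 2 - γ + 1) ≤ α * (γ - 1) / (γ + 2) := by
  rw [div_le_div_iff₀ (by nlinarith) (by linarith)]
  have : 0 ≤ α * (γ - 1) * (γ ^ 2 - 2 * γ + 3) := by
    have : 0 ≤ γ ^ 2 - 2 * γ + 3 := by nlinarith [sq_nonneg (γ - 1)]
    positivity
  nlinarith

theorem sdiff_inter_subset_biUnion_symmDiff {X ι : Type*} [DecidableEq X] [Fintype ι]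
    (D D' : ι → Finset X) (i : ι) :
    D i \ (D i ∩ D' i) ⊆ univ.biUnion fun i => D i ∆ D' i := by
  rw [sdiff_inter_self_left]
  exact symmDiff_subset_sdiff.trans (subset_biUnion_of_mem (fun i => D i ∆ D' i) (mem_univ i))

theorem ne_of_mem_biUnion_symmDiff {X ι : Type*} [DecidableEq X] [Fintype ι]
    {D D' : ι → Finset X} {ℓ ℓ' : X → ι} (hℓ : ∀ x i, x ∈ D i ↔ ℓ x = i)
    (hℓ' : ∀ x i, x ∈ D' i ↔ ℓ' x = i) {x : X} (hx : x ∈ univ.biUnion fun i => D i ∆ D' i) :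
    ℓ x ≠ ℓ' x := by
  intro heq
  obtain ⟨i, -, hi⟩ := mem_biUnion.1 hx
  rw [mem_symmDiff, hℓ, hℓ', heq] at hi
  tauto

section Matched

variable {X : Type*} [Fintype X] [MetricSpace X] [DecidableEq X] {P : X → ℝ} {α γ : ℝ}
  {K : ℕ} {D D' : Fin K → Finset X}

theorem IsGoodClustering.mul_sub_one_div_add_two_le_pOf_biUnion_symmDiff (hP : ∀ x, 0 < P x)
    (hα : 0 < α) (hγ : 0 ≤ γ) (hD : IsGoodClustering P α γ D)
    (hD' : IsGoodClustering P α γ D') (hpos : 0 < pOf P (univ.biUnion fun i => D i ∆ D' i)) :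
    α * (γ - 1) / (γ + 2) ≤ pOf P (univ.biUnion fun i => D i ∆ D' i) := by
  set B := univ.biUnion fun i => D i ∆ D' i
  set ε := pOf P B
  have hP' : ∀ x, 0 ≤ P x := fun x => (hP x).le
  obtain hαε | hεα := le_or_gt α ε
  · exact (mul_sub_one_div_add_two_le hα.le hγ).trans hαε
  obtain ⟨ℓ, hℓ⟩ := hD.exists_label
  obtain ⟨ℓ', hℓ'⟩ := hD'.exists_label
  have hlabel : ∀ x ∈ B, ℓ x ≠ ℓ' x := fun x => ne_of_mem_biUnion_symmDiff hℓ hℓ'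
  set S : Fin K → Finset X := fun i => D i ∩ D' i
  have hDSB : ∀ i, D i \ S i ⊆ B := sdiff_inter_subset_biUnion_symmDiff D D'
  have hD'SB : ∀ i, D' i \ S i ⊆ B := fun i => by
    simpa only [S, B, inter_comm, symmDiff_comm] using
      sdiff_inter_subset_biUnion_symmDiff D' D i
  set m := fun x => Dpt P x (S (ℓ x))
  set m' := fun x => Dpt P x (S (ℓ' x))
  have hkey : ∀ x ∈ B, γ * (1 - ε / α) * (m x + m' x) ≤
      (m x + m' x) + (ε * (m x + m' x) + ∑ y ∈ B, P y * (m y + m' y)) / α := by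
    intro x hx
    have h : γ * (1 - ε / α) * m x ≤ m' x + (ε * m' x + ∑ y ∈ B, P y * m y) / α :=
      hD.mul_Dpt_le hP' hα hγ hℓ (fun i => inter_subset_left) hDSB le_rfl hεα
      (hlabel x hx) ((hℓ x _).2 rfl)
    have h' : γ * (1 - ε / α) * m' x ≤ m x + (ε * m x + ∑ y ∈ B, P y * m' y) / α :=
      hD'.mul_Dpt_le hP' hα hγ hℓ' (fun i => inter_subset_right) hD'SB le_rfl hεα
      (hlabel x hx).symm ((hℓ' x _).2 rfl)
    simp only [mul_add, sum_add_distrib]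
    have hsplit : (ε * m x + ε * m' x + (∑ y ∈ B, P y * m y + ∑ y ∈ B, P y * m' y)) / α =
        (ε * m' x + ∑ y ∈ B, P y * m y) / α + (ε * m x + ∑ y ∈ B, P y * m' y) / α := by
      ring
    linarith
  have hW : 0 < ∑ x ∈ B, P x * (m x + m' x) := by
    obtain ⟨x₀, hx₀⟩ := nonempty_of_sum_ne_zero hpos.ne'
    have hS : (S (ℓ x₀)).Nonempty := nonempty_of_sum_ne_zero (pOf_pos_of_pOf_sdiff_le
      inter_subset_left (pOf_mono hP' (hDSB _)) hεα (hD.2.2.2.1 _)).ne'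
    have hx₀S : x₀ ∉ S (ℓ x₀) := fun h => hlabel x₀ hx₀ ((hℓ' x₀ _).1 (mem_inter.1 h).2).symm
    refine sum_pos' (fun x _ => mul_nonneg (hP' x) ?_) ⟨x₀, hx₀, mul_pos (hP x₀) ?_⟩
    · exact add_nonneg (Dpt_nonneg hP' x _) (Dpt_nonneg hP' x _)
    · exact add_pos_of_pos_of_nonneg (Dpt_pos hP hS hx₀S) (Dpt_nonneg hP' x₀ _)
  exact mul_sub_one_div_add_two_le_of_mul_one_sub_le hα hγ
    (le_one_add_two_mul_div_of_forall_le (fun x _ => hP' x) rfl hW hkey)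

end Matched

section Distance

variable {X : Type*} [DecidableEq X] {P : X → ℝ} {K : ℕ}

theorem exists_dColl_eq (A A' : Fin K → Finset X) :
    ∃ σ : Equiv.Perm (Fin K),
      dColl P A A' = pOf P (univ.biUnion fun i => A i ∆ A' (σ i)) := by
  obtain ⟨σ, -, h⟩ := exists_mem_eq_inf' univ_nonempty
    fun σ : Equiv.Perm (Fin K) => pOf P (univ.biUnion fun i => A i ∆ A' (σ i))
  exact ⟨σ, h⟩

theorem le_dColl_of_exists (hP : ∀ x, 0 ≤ P x) {A A' : Fin K → Finset X} {a : ℝ}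
    (h : ∀ σ : Equiv.Perm (Fin K), ∃ i, a ≤ pOf P (A i ∆ A' (σ i))) : a ≤ dColl P A A' :=
  le_inf' _ _ fun σ _ =>
    let ⟨i, hi⟩ := h σ
    hi.trans (pOf_mono hP (subset_biUnion_of_mem (fun i => A i ∆ A' (σ i)) (mem_univ i)))

/-- With different numbers of clusters, every matching pairs some cluster with a padding `∅`. -/
theorem le_dColl_pad_of_ne (hP : ∀ x, 0 ≤ P x) {α : ℝ} {k k' : ℕ} {C : Fin k → Finset X}
    {C' : Fin k' → Finset X} (hC : ∀ i, α ≤ pOf P (C i)) (hC' : ∀ i, α ≤ pOf P (C' i))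
    (hkk : k ≠ k') : α ≤ dColl P (pad (le_max_left k k') C) (pad (le_max_right k k') C') := by
  refine le_dColl_of_exists hP fun σ => ?_
  rcases hkk.lt_or_gt with h | h
  · set i : Fin (max k k') := ⟨k, lt_max_of_lt_right h⟩
    have hσi : (σ i : ℕ) < k' := (σ i).is_lt.trans_le (max_le h.le le_rfl)
    refine ⟨i, ?_⟩
    rw [pad_apply_of_le _ C (i := i) le_rfl, pad_apply_of_lt _ _ hσi, ← bot_eq_empty,
      bot_symmDiff]
    exact hC' _
  · set j : Fin (max k k') := ⟨k', lt_max_of_lt_left h⟩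
    have hi : (σ.symm j : ℕ) < k := (σ.symm j).is_lt.trans_le (max_le le_rfl h.le)
    refine ⟨σ.symm j, ?_⟩
    rw [Equiv.apply_symm_apply, pad_apply_of_le _ C' (i := j) le_rfl, pad_apply_of_lt _ _ hi,
      ← bot_eq_empty, symmDiff_bot]
    exact hC _

end Distance

theorem mul_sub_one_div_add_two_le_dColl_pad {X : Type*} [Fintype X] [MetricSpace X]
    [DecidableEq X] {P : X → ℝ} (hP : ∀ x, 0 < P x) {α γ : ℝ} (hα : 0 < α) (hγ : 0 ≤ γ)
    {k k' : ℕ} {C : Fin k → Finset X} {C' : Fin k' → Finset X}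
    (hC : IsGoodClustering P α γ C) (hC' : IsGoodClustering P α γ C')
    (hpos : 0 < dColl P (pad (le_max_left k k') C) (pad (le_max_right k k') C')) :
    α * (γ - 1) / (γ + 2) ≤ dColl P (pad (le_max_left k k') C) (pad (le_max_right k k') C') := by
  rcases eq_or_ne k k' with rfl | hkk
  · obtain ⟨σ, hσ⟩ := exists_dColl_eq (P := P) (pad (le_max_left k k) C) (pad (le_max_right k k) C')
    rw [hσ] at hpos ⊢
    exact (hC.pad _ (max_self k).le).mul_sub_one_div_add_two_le_pOf_biUnion_symmDiff hP hα hγ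
      ((hC'.pad _ (max_self k).le).comp_equiv σ) hpos
  · exact (mul_sub_one_div_add_two_le hα.le hγ).trans
      (le_dColl_pad_of_ne (fun x => (hP x).le) hC.2.2.2.1 hC'.2.2.2.1 hkk)

theorem stmt_5_general {X : Type*} [Fintype X] [MetricSpace X] [DecidableEq X]
    (P : X → ℝ) (hP : ∀ x, 0 < P x)
    (α γ : ℝ) (hα : 0 < α) (hγ : 1 < γ)
    {k k' : ℕ} (C : Fin k → Finset X) (C' : Fin k' → Finset X)
    (hC : IsGoodClustering P α γ C) (hC' : IsGoodClustering P α γ C')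
    (hpos : 0 < dColl P (pad (le_max_left k k') C) (pad (le_max_right k k') C')) :
    α * (γ - 1) ^ 2 / (2 * γ ^ 2 - γ + 1) ≤
      dColl P (pad (le_max_left k k') C) (pad (le_max_right k k') C') :=
  (mul_sub_one_sq_div_le_mul_sub_one_div_add_two hα.le hγ.le).trans
    (mul_sub_one_div_add_two_le_dColl_pad hP hα (by linarith) hC hC' hpos)

/-- Two distinct `(α,γ)`-clusterings differ substantially: if `d(C,C') > 0` then
`d(C,C') ≥ α(γ−1)²/(2γ²−γ+1)`. (The shorter collection is padded with empty sets.) -/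
theorem stmt_5 {X : Type*} [Fintype X] [MetricSpace X] [DecidableEq X]
    (P : X → ℝ) (hP : ∀ x, 0 < P x) (hsum : ∑ x, P x = 1)
    (α γ : ℝ) (hα : 0 < α) (hγ : 1 < γ)
    {k k' : ℕ} (C : Fin k → Finset X) (C' : Fin k' → Finset X)
    (hC : IsGoodClustering P α γ C) (hC' : IsGoodClustering P α γ C')
    (hpos : 0 < dColl P (pad (le_max_left k k') C) (pad (le_max_right k k') C')) :
    α * (γ - 1) ^ 2 / (2 * γ ^ 2 - γ + 1) ≤
      dColl P (pad (le_max_left k k') C) (pad (le_max_right k k') C') :=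
  stmt_5_general P hP α γ hα hγ C C' hC hC' hpos
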